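/- Let (g,[·,…,·],α,⟨,⟩) be a metric n-ary multiplicative Hom-Nambu-Lie superalgebra of even dimension m over a field, and let I be an isotropic Hom-ideal of dimension m/2. Then I is abelian, i.e., [g,…,g,I,I] = 0. -/

import Mathlib

open scoped BigOperators

universe u v w

variable (K : Type u) [Field K]

/-- The sign `(-1)^(a·b)` for `a b : ZMod 2`. -/
def sgn (a b : ZMod 2) : K := if a = 1 ∧ b = 1 then -1 else 1

/-- Sum of the degrees with index strictly below `i`. -/
def psum {m : ℕ} (d : Fin m → ZMod 2) (i : Fin m) : ZMod 2 :=
  ∑ j ∈ Finset.univ.filter (fun j => j < i), d j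

/-- Sum of the degrees with index strictly above `i`. -/
def ssum {m : ℕ} (d : Fin m → ZMod 2) (i : Fin m) : ZMod 2 :=
  ∑ j ∈ Finset.univ.filter (fun j => i < j), d j

/-- Raw data of an `(n+2)`-ary algebra with a `ZMod 2`-grading and a twisting map:
a grading by submodules forming an internal direct sum, an `(n+2)`-linear bracket and
a linear map `α`. -/
structure NData (n : ℕ) (g : Type v) [AddCommGroup g] [Module K g] where
  G : ZMod 2 → Submodule K g
  internal : DirectSum.IsInternal G
  br : MultilinearMap K (fun _ : Fin (n + 2) => g) g
  α : g →ₗ[K] g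

namespace NData

variable {K} {n : ℕ} {g : Type v} [AddCommGroup g] [Module K g] (A : NData K n g)

/-- A tuple is homogeneous with (componentwise) degrees `d`. -/
def Homog {m : ℕ} (x : Fin m → g) (d : Fin m → ZMod 2) : Prop := ∀ i, x i ∈ A.G (d i)

/-- Action of a fundamental object (an `(n+1)`-tuple) on an element. -/
def act (x : Fin (n + 1) → g) (z : g) : g := A.br (Fin.snoc x z)

/-- The `i`-th component tuple of the bracket `[x,y]_α` of fundamental objects:
`α y₁ ∧ ⋯ ∧ (x · yᵢ) ∧ ⋯ ∧ α y_{n+1}`. -/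
def comp (x y : Fin (n + 1) → g) (i : Fin (n + 1)) : Fin (n + 1) → g :=
  Function.update (fun k => A.α (y k)) i (A.act x (y i))

/-- The bracket is even. -/
def BrEven : Prop := ∀ (d : Fin (n + 2) → ZMod 2) (x : Fin (n + 2) → g),
  A.Homog x d → A.br x ∈ A.G (∑ i, d i)

/-- The bracket is super-skew-symmetric in adjacent arguments. -/
def BrSkew : Prop := ∀ (d : Fin (n + 2) → ZMod 2) (x : Fin (n + 2) → g), A.Homog x d →
  ∀ i j : Fin (n + 2), (i : ℕ) + 1 = (j : ℕ) →
    A.br (x ∘ Equiv.swap i j) = -(sgn K (d i) (d j) • A.br x)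

/-- `α` is even. -/
def AlphaEven : Prop := ∀ (d : ZMod 2) (x : g), x ∈ A.G d → A.α x ∈ A.G d

/-- `α` is multiplicative with respect to the bracket. -/
def Mult : Prop := ∀ x : Fin (n + 2) → g, A.α (A.br x) = A.br fun i => A.α (x i)

/-- The graded Filippov (fundamental) identity. -/
def Filippov : Prop := ∀ (dx : Fin (n + 1) → ZMod 2) (dy : Fin (n + 2) → ZMod 2)
    (x : Fin (n + 1) → g) (y : Fin (n + 2) → g), A.Homog x dx → A.Homog y dy →
  A.act x (A.br y) = ∑ i, sgn K (∑ k, dx k) (psum dy i) •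
    A.br (Function.update y i (A.act x (y i)))

/-- The `α`-twisted graded Filippov identity. -/
def HomFilippov : Prop := ∀ (dx : Fin (n + 1) → ZMod 2) (dy : Fin (n + 2) → ZMod 2)
    (x : Fin (n + 1) → g) (y : Fin (n + 2) → g), A.Homog x dx → A.Homog y dy →
  A.act (fun k => A.α (x k)) (A.br y) = ∑ i, sgn K (∑ k, dx k) (psum dy i) •
    A.br (Function.update (fun k => A.α (y k)) i (A.act x (y i)))

/-- `(g,[·,…,·])` is an `(n+2)`-ary Nambu-Lie superalgebra (the map `α` is irrelevant). -/
def IsNambuLieSuper : Prop := A.BrEven ∧ A.BrSkew ∧ A.Filippov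

/-- `(g,[·,…,·],α)` is an `(n+2)`-ary multiplicative Hom-Nambu-Lie superalgebra. -/
def IsHomNambuLieSuper : Prop :=
  A.BrEven ∧ A.BrSkew ∧ A.AlphaEven ∧ A.Mult ∧ A.HomFilippov

/-- The action of the bracket `[x,y]_α` of two fundamental objects on an element `z`,
where `dx` is the total degree of `x` and `dy` the componentwise degrees of `y`. -/
def wbrAct (dx : ZMod 2) (dy : Fin (n + 1) → ZMod 2) (x y : Fin (n + 1) → g) (z : g) : g :=
  ∑ i, sgn K dx (psum dy i) • A.act (A.comp x y i) z

/-- `(ρ, ν, GV)` is a graded representation of `A` on `V`. -/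
def IsRep {V : Type w} [AddCommGroup V] [Module K V]
    (ρ : MultilinearMap K (fun _ : Fin (n + 1) => g) (Module.End K V))
    (ν : Module.End K V) (GV : ZMod 2 → Submodule K V) : Prop :=
  (∀ (d : Fin (n + 1) → ZMod 2) (x : Fin (n + 1) → g), A.Homog x d →
    ∀ (β : ZMod 2) (v : V), v ∈ GV β → ρ x v ∈ GV (β + ∑ i, d i)) ∧
  (∀ (dx dy : Fin (n + 1) → ZMod 2) (x y : Fin (n + 1) → g), A.Homog x dx → A.Homog y dy →
    ρ (fun k => A.α (x k)) * ρ y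
      = sgn K (∑ i, dx i) (∑ i, dy i) • (ρ (fun k => A.α (y k)) * ρ x)
        + (∑ i, sgn K (∑ k, dx k) (psum dy i) • ρ (A.comp x y i)) * ν) ∧
  (∀ (dx : Fin n → ZMod 2) (dy : Fin (n + 2) → ZMod 2) (x : Fin n → g) (y : Fin (n + 2) → g),
    A.Homog x dx → A.Homog y dy →
    ρ (Fin.snoc (fun k => A.α (x k)) (A.br y)) * ν
      = ∑ i : Fin (n + 2), ((-1 : K) ^ (n + 1 - (i : ℕ))
          * sgn K (∑ k, dx k) ((∑ k, dy k) + dy i)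
          * sgn K (dy i) (ssum dy i)) •
        (ρ (fun k => A.α (y (i.succAbove k))) * ρ (Fin.snoc x (y i))))

/-- The adjoint action of a fundamental object, as an endomorphism of `g`. -/
def adE : MultilinearMap K (fun _ : Fin (n + 1) => g) (Module.End K g) :=
  A.br.curryRight

/-- The degree-`d` part of the graded dual space: functionals vanishing on the
component of the other degree. -/
def dualG (d : ZMod 2) : Submodule K (Module.Dual K g) where
  carrier := {f | ∀ x ∈ A.G (d + 1), f x = 0}
  add_mem' := by
    intro a b ha hb x hx
    simp [ha x hx, hb x hx]
  zero_mem' := by intro x _; simp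
  smul_mem' := by
    intro c f hf x hx
    simp [hf x hx]

/-- The coadjoint action `ad*(x)(φ) = -(-1)^{|x||φ|} φ ∘ ad(x)`, with the degrees
`dx` of `x` and `df` of `φ` given explicitly. -/
def coad (dx df : ZMod 2) (x : Fin (n + 1) → g) (φ : Module.Dual K g) : Module.Dual K g :=
  -(sgn K dx df) • (φ ∘ₗ (A.adE x : g →ₗ[K] g))

/-- The grading of `g ⊕ g*`. -/
def tG (d : ZMod 2) : Submodule K (g × Module.Dual K g) := (A.G d).prod (A.dualG d)

/-- The twist map `α'(x+f) = α(x) + f ∘ α` of the `T*`-extension. -/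
def tα : (g × Module.Dual K g) →ₗ[K] g × Module.Dual K g :=
  LinearMap.prodMap A.α A.α.dualMap

/-- The bracket of the `T*`-extension by `θ`, on tuples with degree annotations `d`. -/
def tbr (θ : (Fin (n + 2) → g) → Module.Dual K g) (d : Fin (n + 2) → ZMod 2)
    (p : Fin (n + 2) → g × Module.Dual K g) : g × Module.Dual K g :=
  (A.br (fun i => (p i).1),
   θ (fun i => (p i).1)
     + ∑ i : Fin (n + 2), ((-1 : K) ^ (n + 1 - (i : ℕ)) * sgn K (d i) (ssum d i)) •
         A.coad ((∑ k, d k) + d i) (d i) (fun k => (p (i.succAbove k)).1) ((p i).2))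

/-- The canonical pairing `⟨x+f, y+h⟩ = f(y) + (-1)^{|x+f||y+h|} h(x)` on `g ⊕ g*`,
with the degrees given explicitly. -/
def tpair (_A : NData K n g) (d₁ d₂ : ZMod 2) (u v : g × Module.Dual K g) : K :=
  u.2 v.1 + sgn K d₁ d₂ * v.2 u.1

/-- The coboundary of a `1`-cochain with values in the dual module (with the coadjoint
action), on homogeneous arguments with the indicated degrees. -/
def tdelta (θ : (Fin (n + 2) → g) → Module.Dual K g)
    (dx : Fin (n + 1) → ZMod 2) (dY : Fin (n + 2) → ZMod 2)
    (x : Fin (n + 1) → g) (Y : Fin (n + 2) → g) : Module.Dual K g :=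
  θ (Fin.snoc (fun k => A.α (x k)) (A.br Y))
    + A.coad (∑ k, dx k) (∑ k, dY k) (fun k => A.α (x k)) (θ Y)
    - ∑ i, sgn K (∑ k, dx k) (psum dY i) •
        θ (Function.update (fun k => A.α (Y k)) i (A.act x (Y i)))
    - ∑ i : Fin (n + 2), (sgn K (∑ k, dx k) (psum dY i) * (-1 : K) ^ (n + 1 - (i : ℕ))
          * sgn K ((∑ k, dx k) + dY i) (ssum dY i)) •
        A.coad ((∑ k, dY k) + dY i) ((∑ k, dx k) + dY i)
          (fun k => A.α (Y (i.succAbove k))) (θ (Fin.snoc x (Y i)))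

/-- `θ` is an even `1`-supercocycle with values in `g*`:
it is even, equivariant, super-skew-symmetric and `δθ = 0`. -/
def TZ1 (θ : (Fin (n + 2) → g) → Module.Dual K g) : Prop :=
  (∀ (d : Fin (n + 2) → ZMod 2) (p : Fin (n + 2) → g), A.Homog p d →
      θ p ∈ A.dualG (∑ i, d i)) ∧
  (∀ p : Fin (n + 2) → g, θ (fun i => A.α (p i)) = (θ p).comp A.α) ∧
  (∀ (d : Fin (n + 2) → ZMod 2) (p : Fin (n + 2) → g), A.Homog p d →
      ∀ i j : Fin (n + 2), (i : ℕ) + 1 = (j : ℕ) →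
        θ (p ∘ Equiv.swap i j) = -(sgn K (d i) (d j) • θ p)) ∧
  (∀ (dx : Fin (n + 1) → ZMod 2) (dY : Fin (n + 2) → ZMod 2)
      (x : Fin (n + 1) → g) (Y : Fin (n + 2) → g), A.Homog x dx → A.Homog Y dY →
        A.tdelta θ dx dY x Y = 0)

/-- The cyclicity condition `θ(x,y)(z) + (-1)^{|y||z|} θ(x,z)(y) = 0`. -/
def TCyclic (θ : (Fin (n + 2) → g) → Module.Dual K g) : Prop :=
  ∀ (dx : Fin (n + 1) → ZMod 2) (dy dz : ZMod 2) (x : Fin (n + 1) → g) (y z : g),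
    A.Homog x dx → y ∈ A.G dy → z ∈ A.G dz →
      θ (Fin.snoc x y) z + sgn K dy dz * θ (Fin.snoc x z) y = 0

/-- `I` is a Hom-ideal: stable under `α` and absorbing in the first slot. -/
def IsHomIdeal (I : Submodule K g) : Prop :=
  (∀ x ∈ I, A.α x ∈ I) ∧ ∀ p : Fin (n + 2) → g, p 0 ∈ I → A.br p ∈ I

/-- `I` is a graded subspace: it is spanned by its homogeneous elements. -/
def IsGradedSub (I : Submodule K g) : Prop :=
  I ≤ Submodule.span K ((I : Set g) ∩ ((A.G 0 : Set g) ∪ (A.G 1 : Set g)))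

/-- The orthogonal space of `S` with respect to a bilinear form `B`. -/
def perpB (_A : NData K n g) (B : g →ₗ[K] g →ₗ[K] K) (S : Submodule K g) : Submodule K g where
  carrier := {x | ∀ y ∈ S, B x y = 0}
  add_mem' := by
    intro a b ha hb y hy
    simp [ha y hy, hb y hy]
  zero_mem' := by intro y _; simp
  smul_mem' := by
    intro c x hx y hy
    simp [hx y hy]

/-- `B` is a metric on `A`: nondegenerate, supersymmetric, consistent, invariant, and
`α` is `B`-symmetric. -/
def IsMetric (B : g →ₗ[K] g →ₗ[K] K) : Prop :=
  (∀ x : g, (∀ y : g, B x y = 0) → x = 0) ∧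
  (∀ (dx dy : ZMod 2) (x y : g), x ∈ A.G dx → y ∈ A.G dy →
      B x y = sgn K dx dy * B y x) ∧
  (∀ (dx dy : ZMod 2) (x y : g), x ∈ A.G dx → y ∈ A.G dy → dx ≠ dy → B x y = 0) ∧
  (∀ (dx : Fin (n + 1) → ZMod 2) (dy : ZMod 2) (x : Fin (n + 1) → g) (y z : g),
      A.Homog x dx → y ∈ A.G dy →
        B (A.act x y) z = -(sgn K (∑ i, dx i) dy * B y (A.act x z))) ∧
  (∀ x y : g, B (A.α x) y = B (A.α y) x)

/-- `[S, g, …, g]` (ideal-type product, `S` in the first slot). -/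
def brFirst (S : Submodule K g) : Submodule K g :=
  Submodule.span K {y | ∃ p : Fin (n + 2) → g, p 0 ∈ S ∧ y = A.br p}

/-- `[g, …, g, S]` (`S` in the last slot). -/
def brLast (S : Submodule K g) : Submodule K g :=
  Submodule.span K {y | ∃ p : Fin (n + 2) → g, p (Fin.last (n + 1)) ∈ S ∧ y = A.br p}

/-- `[S, …, S]` (all slots in `S`). -/
def brAll (S : Submodule K g) : Submodule K g :=
  Submodule.span K {y | ∃ p : Fin (n + 2) → g, (∀ i, p i ∈ S) ∧ y = A.br p}

/-- The lower central series: `lcs 0 = g = g¹`, `lcs m = g^{m+1}`. -/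
def lcs (m : ℕ) : Submodule K g := Nat.rec ⊤ (fun _ ih => A.brFirst ih) m

/-- The derived series: `ds 0 = g = g^{(0)}`, `ds m = g^{(m)}`. -/
def ds (m : ℕ) : Submodule K g := Nat.rec ⊤ (fun _ ih => A.brAll ih) m

/-- `C(V) = {x | [x,g,…,g] ⊆ V}`. -/
def cv (S : Submodule K g) : Submodule K g where
  carrier := {x | ∀ p : Fin (n + 2) → g, A.br (Function.update p 0 x) ∈ S}
  add_mem' := by
    intro a b ha hb p
    rw [A.br.map_update_add]
    exact S.add_mem (ha p) (hb p)
  zero_mem' := by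
    intro p
    rw [A.br.map_update_zero]
    exact S.zero_mem
  smul_mem' := by
    intro c x hx p
    rw [A.br.map_update_smul]
    exact S.smul_mem c (hx p)

/-- The ascending series `C₀(g) = 0`, `C_{i+1}(g) = C(Cᵢ(g))`. -/
def cs (m : ℕ) : Submodule K g := Nat.rec ⊥ (fun _ ih => A.cv ih) m

/-- `g` is nilpotent of length exactly `k` (with the convention `g¹ = g = lcs 0`). -/
def NilpLength (k : ℕ) : Prop :=
  1 ≤ k ∧ A.lcs (k - 1) = ⊥ ∧ ∀ j, 1 ≤ j → j < k → A.lcs (j - 1) ≠ ⊥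

/-- `g` is solvable of length exactly `k`. -/
def SolvLength (k : ℕ) : Prop :=
  A.ds k = ⊥ ∧ ∀ j < k, A.ds j ≠ ⊥

/-- `[S, T*g, …, T*g]_θ`-type span for the `T*`-extension, `S` in the first slot,
over homogeneous annotated tuples. -/
def tbrFirst (θ : (Fin (n + 2) → g) → Module.Dual K g)
    (S : Submodule K (g × Module.Dual K g)) : Submodule K (g × Module.Dual K g) :=
  Submodule.span K {u | ∃ (d : Fin (n + 2) → ZMod 2) (p : Fin (n + 2) → g × Module.Dual K g),
    (∀ i, p i ∈ A.tG (d i)) ∧ p 0 ∈ S ∧ u = A.tbr θ d p}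

/-- All-slots bracket span for the `T*`-extension, over homogeneous annotated tuples. -/
def tbrAll (θ : (Fin (n + 2) → g) → Module.Dual K g)
    (S : Submodule K (g × Module.Dual K g)) : Submodule K (g × Module.Dual K g) :=
  Submodule.span K {u | ∃ (d : Fin (n + 2) → ZMod 2) (p : Fin (n + 2) → g × Module.Dual K g),
    (∀ i, p i ∈ A.tG (d i)) ∧ (∀ i, p i ∈ S) ∧ u = A.tbr θ d p}

/-- Lower central series of the `T*`-extension. -/
def tlcs (θ : (Fin (n + 2) → g) → Module.Dual K g) (m : ℕ) :
    Submodule K (g × Module.Dual K g) := Nat.rec ⊤ (fun _ ih => A.tbrFirst θ ih) m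

/-- Derived series of the `T*`-extension. -/
def tds (θ : (Fin (n + 2) → g) → Module.Dual K g) (m : ℕ) :
    Submodule K (g × Module.Dual K g) := Nat.rec ⊤ (fun _ ih => A.tbrAll θ ih) m

/-- Nilpotency length of the `T*`-extension. -/
def TNilpLength (θ : (Fin (n + 2) → g) → Module.Dual K g) (k : ℕ) : Prop :=
  1 ≤ k ∧ A.tlcs θ (k - 1) = ⊥ ∧ ∀ j, 1 ≤ j → j < k → A.tlcs θ (j - 1) ≠ ⊥

/-- Solvability length of the `T*`-extension. -/
def TSolvLength (θ : (Fin (n + 2) → g) → Module.Dual K g) (k : ℕ) : Prop :=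
  A.tds θ k = ⊥ ∧ ∀ j < k, A.tds θ j ≠ ⊥

end NData

/-!
Invariance of the metric gives `⟨[x₁, …, xₙ₊₁, b], z⟩ = ±⟨b, [x₁, …, xₙ₊₁, z]⟩`. If `xₙ₊₁` and `b`
lie in `I`, the bracket on the right lies in the ideal `I` (skew-symmetry carries `xₙ₊₁` to the
first slot), so the pairing vanishes by isotropy and nondegeneracy kills `[x₁, …, xₙ₊₁, b]`.
Invariance and skew-symmetry only speak about homogeneous elements; multilinearity reduces to
that case because `I` is spanned by its homogeneous elements.
-/

theorem MultilinearMap.map_mem_of_forall_mem_span {R ι N : Type*} {M : ι → Type*}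
    [CommSemiring R] [Finite ι] [∀ i, AddCommMonoid (M i)]
    [∀ i, Module R (M i)] [AddCommMonoid N] [Module R N]
    (f : MultilinearMap R M N) {T : ∀ i, Set (M i)} {S : Submodule R N}
    (hT : ∀ q : ∀ i, M i, (∀ i, q i ∈ T i) → f q ∈ S)
    {q : ∀ i, M i} (hq : ∀ i, q i ∈ Submodule.span R (T i)) : f q ∈ S := by
  classical
  have := Fintype.ofFinite ι
  suffices key : ∀ s : Finset ι, ∀ q : ∀ i, M i, (∀ i, q i ∈ Submodule.span R (T i)) →
      (∀ i ∉ s, q i ∈ T i) → f q ∈ S from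
    key Finset.univ q hq fun i hi => absurd (Finset.mem_univ i) hi
  intro s
  induction s using Finset.induction with
  | empty => exact fun q _ hqT => hT q fun i => hqT i (Finset.notMem_empty i)
  | insert i s hi ih =>
    intro q hq hqT
    suffices hupdate : ∀ x ∈ Submodule.span R (T i), f (Function.update q i x) ∈ S by
      simpa using hupdate _ (hq i)
    intro x hx
    induction hx using Submodule.span_induction with
    | mem x hx =>
      refine ih _ (fun j => ?_) fun j hj => ?_
      · rcases eq_or_ne j i with rfl | hji
        · simpa using Submodule.subset_span hx
        · simpa [hji] using hq j
      · rcases eq_or_ne j i with rfl | hji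
        · simp [hx]
        · simpa [hji] using hqT j (by simp [hji, hj])
    | zero => simp
    | add x y _ _ hx hy => simpa using S.add_mem hx hy
    | smul a x _ hx => simpa using S.smul_mem a hx

lemma sgn_mul_self {K : Type u} [Field K] (a b : ZMod 2) : sgn K a b * sgn K a b = 1 := by
  unfold sgn; split <;> norm_num

namespace NData

variable {K} {n : ℕ} {g : Type v} [AddCommGroup g] [Module K g] (A : NData K n g)

def homogeneousElems : Set g := ⋃ d, (A.G d : Set g)

lemma span_homogeneousElems : Submodule.span K A.homogeneousElems = ⊤ := by
  simpa [homogeneousElems, Submodule.span_iUnion] using A.internal.submodule_iSup_eq_top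

variable {A}

lemma IsGradedSub.le_span_inter {I : Submodule K g} (hI : A.IsGradedSub I) :
    I ≤ Submodule.span K ((I : Set g) ∩ A.homogeneousElems) := by
  refine hI.trans (Submodule.span_mono (Set.inter_subset_inter_right _ ?_))
  rintro x (hx | hx)
  exacts [Set.mem_iUnion_of_mem 0 hx, Set.mem_iUnion_of_mem 1 hx]

lemma Homog.snoc {m : ℕ} {x : Fin m → g} {d : Fin m → ZMod 2} (hx : A.Homog x d)
    {z : g} {e : ZMod 2} (hz : z ∈ A.G e) : A.Homog (Fin.snoc x z) (Fin.snoc d e) :=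
  Fin.lastCases (by simpa using hz) (fun k => by simpa using hx k)

lemma br_mem_of_mem (hskew : A.BrSkew) {I : Submodule K g}
    (hI : ∀ p : Fin (n + 2) → g, p 0 ∈ I → A.br p ∈ I)
    (k : Fin (n + 2)) {d : Fin (n + 2) → ZMod 2} {q : Fin (n + 2) → g} (hq : A.Homog q d)
    (hk : q k ∈ I) : A.br q ∈ I := by
  induction k using Fin.induction generalizing d q with
  | zero => exact hI q hk
  | succ k ih =>
    have hswap := hskew d q hq k.castSucc k.succ (by simp)
    have hmem : A.br (q ∘ Equiv.swap k.castSucc k.succ) ∈ I :=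
      ih (fun j => hq _) (by simpa using hk)
    rw [hswap, neg_mem_iff] at hmem
    simpa [smul_smul, sgn_mul_self] using I.smul_mem (sgn K (d k.castSucc) (d k.succ)) hmem

lemma br_eq_zero_of_homog (hskew : A.BrSkew) {B : g →ₗ[K] g →ₗ[K] K} (hB : A.IsMetric B)
    {I : Submodule K g} (hI : ∀ p : Fin (n + 2) → g, p 0 ∈ I → A.br p ∈ I)
    (hiso : I ≤ A.perpB B I) {d : Fin (n + 2) → ZMod 2} {q : Fin (n + 2) → g}
    (hq : A.Homog q d) (hqn : q (Fin.last n).castSucc ∈ I) (hqlast : q (Fin.last (n + 1)) ∈ I) :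
    A.br q = 0 := by
  have hinit : A.Homog (Fin.init q) (Fin.init d) := fun k => hq k.castSucc
  suffices hvanish : A.homogeneousElems ⊆ LinearMap.ker (B (A.br q)) by
    have hker := Submodule.span_le.mpr hvanish
    rw [A.span_homogeneousElems, top_le_iff, LinearMap.ker_eq_top] at hker
    exact hB.1 _ (by simp [hker])
  intro z hz
  obtain ⟨e, hz⟩ := Set.mem_iUnion.mp hz
  -- `⟨[x, b], z⟩ = ±⟨b, [x, z]⟩`, and `[x, z] ∈ I` because the last entry of `x` lies in `I`
  have hact : A.act (Fin.init q) z ∈ I :=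
    br_mem_of_mem hskew hI (Fin.last n).castSucc (hinit.snoc hz) (by simpa [Fin.init] using hqn)
  have hinv := hB.2.2.2.1 _ _ _ (q (Fin.last (n + 1))) z hinit (hq _)
  rw [act, Fin.snoc_init_self] at hinv
  simp [hinv, hiso hqlast _ hact]

end NData

theorem isotropic_half_ideal_abelian {K : Type u} [Field K] {n : ℕ} {g : Type v}
    [AddCommGroup g] [Module K g] (A : NData K n g) (hA : A.IsHomNambuLieSuper)
    (B : g →ₗ[K] g →ₗ[K] K) (hB : A.IsMetric B)
    (I : Submodule K g) (hI : A.IsHomIdeal I) (hIgr : A.IsGradedSub I)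
    (hiso : I ≤ A.perpB B I) :
    ∀ p : Fin (n + 2) → g,
      p ⟨n, by omega⟩ ∈ I → p (Fin.last (n + 1)) ∈ I → A.br p = 0 := by
  intro p hpn hplast
  let slotsInI : Set (Fin (n + 2)) := {(Fin.last n).castSucc, Fin.last (n + 1)}
  let T : Fin (n + 2) → Set g := fun i => {x ∈ A.homogeneousElems | i ∈ slotsInI → x ∈ I}
  have hspan : ∀ i, p i ∈ Submodule.span K (T i) := by
    intro i
    by_cases hi : i ∈ slotsInI
    · have hsub : (I : Set g) ∩ A.homogeneousElems ⊆ T i := fun x hx => ⟨hx.2, fun _ => hx.1⟩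
      refine Submodule.span_mono hsub (hIgr.le_span_inter ?_)
      rcases hi with rfl | rfl
      exacts [hpn, hplast]
    · have hsub : A.homogeneousElems ⊆ T i := fun x hx => ⟨hx, fun h => absurd h hi⟩
      exact Submodule.span_mono hsub (by simp [A.span_homogeneousElems])
  have hT : ∀ q : Fin (n + 2) → g, (∀ i, q i ∈ T i) → A.br q ∈ (⊥ : Submodule K g) := by
    intro q hq
    choose d hd using fun i => Set.mem_iUnion.mp (hq i).1
    exact (Submodule.mem_bot K).mpr <| NData.br_eq_zero_of_homog hA.2.1 hB hI.2 hiso hd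
      ((hq _).2 (by simp [slotsInI])) ((hq _).2 (by simp [slotsInI]))
  simpa using A.br.map_mem_of_forall_mem_span hT hspan
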